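/- arXiv:1806.07888 — 2 statements merged into one kernel-verified Lean document; each statement's English description precedes it below -/
import Mathlib

section
/- For real x with 0 < x < π, ln(sin(x)/x) = −∑_{k=1}^∞ (ζ(2k)/(k·π^{2k}))·x^{2k}. -/
/-!
Euler's product `sin x = x ∏ₙ (1 - x² / (π² n²))` turns `-log (sin x / x)` into the series
`∑ₙ -log (1 - x² / (π² n²))`. Expanding each `-log (1 - r) = ∑ₖ rᵏ / k` gives a double series of
nonnegative terms, so the order of summation may be exchanged; summing over `n` first produces
`ζ(2k) x^{2k} / (k π^{2k})`.
-/

open Real Filter Topology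

lemma hasSum_neg_log_of_tendsto_prod {f : ℕ → ℝ} (hf_pos : ∀ n, 0 < f n) (hf_le : ∀ n, f n ≤ 1)
    {L : ℝ} (hL : 0 < L) (h : Tendsto (fun n ↦ ∏ i ∈ Finset.range n, f i) atTop (𝓝 L)) :
    HasSum (fun n ↦ -log (f n)) (-log L) := by
  rw [hasSum_iff_tendsto_nat_of_nonneg fun n ↦ neg_nonneg.2 (log_nonpos (hf_pos n).le (hf_le n))]
  refine ((continuousAt_log hL.ne').tendsto.comp h).neg.congr fun n ↦ ?_
  rw [Function.comp_apply, log_prod fun i _ ↦ (hf_pos i).ne', Finset.sum_neg_distrib]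

lemma HasSum.hasSum_tsum_comm_of_nonneg {β γ : Type*} {F : β → γ → ℝ} (hF : ∀ b c, 0 ≤ F b c)
    {a : β → ℝ} {s : ℝ} (hrow : ∀ b, HasSum (F b) (a b)) (ha : HasSum a s) :
    HasSum (fun c ↦ ∑' b, F b c) s := by
  have hF' : Summable (Function.uncurry F) :=
    (summable_prod_of_nonneg fun p ↦ hF p.1 p.2).2
      ⟨fun b ↦ (hrow b).summable, ha.summable.congr fun b ↦ ((hrow b).tsum_eq).symm⟩
  have htotal : HasSum (Function.uncurry F) s := by
    convert hF'.hasSum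
    exact ha.unique (hF'.hasSum.prod_fiberwise hrow)
  exact ((Equiv.prodComm γ β).hasSum_iff.2 htotal).prod_fiberwise fun c ↦
    (hF'.prod_symm.prod_factor c).hasSum

lemma Real.tendsto_prod_one_sub_sq_div {x : ℝ} (hx : x ≠ 0) :
    Tendsto (fun n : ℕ ↦ ∏ j ∈ Finset.range n, (1 - (x / (π * (j + 1))) ^ 2)) atTop
      (𝓝 (sin x / x)) := by
  have h := (tendsto_euler_sin_prod (x / π)).div_const x
  rw [mul_div_cancel₀ x pi_ne_zero] at h
  refine h.congr fun n ↦ ?_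
  rw [mul_div_cancel_left₀ _ hx]
  refine Finset.prod_congr rfl fun j _ ↦ ?_
  rw [div_pow, div_pow, mul_pow, div_div]

lemma Real.hasSum_neg_log_sin_div {x : ℝ} (hx_pos : 0 < x) (hx_lt : x < π) :
    HasSum (fun k : ℕ ↦ (∑' n : ℕ, 1 / ((n : ℝ) + 1) ^ (2 * (k + 1)))
        / ((k + 1) * π ^ (2 * (k + 1))) * x ^ (2 * (k + 1))) (-log (sin x / x)) := by
  set r : ℕ → ℝ := fun n ↦ (x / (π * (n + 1))) ^ 2 with hr
  have hr_pos : ∀ n, 0 < r n := fun n ↦ by positivity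
  have hr_lt_one : ∀ n, r n < 1 := fun n ↦ by
    have : x < π * (n + 1) := by nlinarith [pi_pos, (Nat.cast_nonneg n : (0 : ℝ) ≤ n)]
    exact pow_lt_one₀ (by positivity) ((div_lt_one (by positivity)).2 this) two_ne_zero
  have hlog : HasSum (fun n ↦ -log (1 - r n)) (-log (sin x / x)) :=
    hasSum_neg_log_of_tendsto_prod (fun n ↦ sub_pos.2 (hr_lt_one n))
      (fun n ↦ sub_le_self _ (hr_pos n).le) (div_pos (sin_pos_of_pos_of_lt_pi hx_pos hx_lt) hx_pos)
      (tendsto_prod_one_sub_sq_div hx_pos.ne')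
  have hrow : ∀ n, HasSum (fun k : ℕ ↦ r n ^ (k + 1) / (k + 1)) (-log (1 - r n)) := fun n ↦
    hasSum_pow_div_log_of_abs_lt_one (by rw [abs_of_pos (hr_pos n)]; exact hr_lt_one n)
  convert hlog.hasSum_tsum_comm_of_nonneg (fun n k ↦ by positivity) hrow using 2 with k
  rw [← tsum_div_const, ← tsum_mul_right]
  congr 1 with n
  simp only [hr, ← pow_mul, div_pow, mul_pow]
  field_simp

lemma riemannZeta_natCast_eq_ofReal_tsum {k : ℕ} (hk : 1 < k) :
    riemannZeta k = ((∑' n : ℕ, 1 / ((n : ℝ) + 1) ^ k : ℝ) : ℂ) := by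
  rw [zeta_eq_tsum_one_div_nat_add_one_cpow (by exact_mod_cast hk), Complex.ofReal_tsum]
  refine tsum_congr fun n ↦ ?_
  push_cast
  exact congrArg _ (Complex.cpow_natCast _ k)

theorem stmt_4 (x : ℝ) (h1 : 0 < x) (h2 : x < π) :
    (↑(Real.log (Real.sin x / x)) : ℂ)
      = -∑' k : ℕ, riemannZeta (2 * ((k : ℂ) + 1))
          / (((k : ℂ) + 1) * (π : ℂ) ^ (2 * (k + 1))) * (x : ℂ) ^ (2 * (k + 1)) := by
  have hζ : ∀ k : ℕ, riemannZeta (2 * ((k : ℂ) + 1))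
      = ((∑' n : ℕ, 1 / ((n : ℝ) + 1) ^ (2 * (k + 1)) : ℝ) : ℂ) := fun k ↦ by
    exact_mod_cast riemannZeta_natCast_eq_ofReal_tsum (k := 2 * (k + 1)) (by omega)
  rw [← neg_eq_iff_eq_neg, ← Complex.ofReal_neg,
    ← (Complex.hasSum_ofReal.2 (hasSum_neg_log_sin_div h1 h2)).tsum_eq]
  refine tsum_congr fun k ↦ ?_
  rw [hζ]
  push_cast
  rfl
end

section
/- For real x with 0 < x < 2π, the series ∑_{n=1}^∞ cos(nx)/n converges to −ln(2·sin(x/2)). -/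
/-! With `z = exp (i x)`, the sum is the real part of `∑ zⁿ/n`. Since the partial sums of `∑ zⁿ`
are bounded for `z ≠ 1` on the unit circle, Dirichlet's test makes `∑ zⁿ/n` converge, and Abel's
limit theorem identifies its sum as the radial limit of `-log (1 - r z)`, namely `-log (1 - z)`.
Finally `log ‖1 - exp (i x)‖ = log (2 sin (x/2))`. -/

open Real Filter Topology Finset

lemma norm_sum_range_pow_succ_le {𝕜 : Type*} [NormedField 𝕜] {z : 𝕜} (hz : ‖z‖ ≤ 1)
    (hz1 : z ≠ 1) (n : ℕ) : ‖∑ i ∈ range n, z ^ (i + 1)‖ ≤ 2 / ‖1 - z‖ := by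
  have hsum : ∑ i ∈ range n, z ^ (i + 1) = z * ((z ^ n - 1) / (z - 1)) := by
    simp only [pow_succ', ← mul_sum, geom_sum_eq hz1]
  have hnum : ‖z ^ n - 1‖ ≤ 2 := calc
    ‖z ^ n - 1‖ ≤ ‖z‖ ^ n + ‖(1 : 𝕜)‖ := by grw [norm_sub_le, norm_pow]
    _ ≤ 2 := by grw [hz]; norm_num
  rw [hsum, norm_mul, norm_div, norm_sub_rev z]
  calc ‖z‖ * (‖z ^ n - 1‖ / ‖1 - z‖) ≤ 1 * (2 / ‖1 - z‖) := by gcongr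
    _ = 2 / ‖1 - z‖ := one_mul _

namespace Complex

variable {z : ℂ}

lemma one_sub_mem_slitPlane (hz : ‖z‖ ≤ 1) (hz1 : z ≠ 1) : 1 - z ∈ slitPlane := by
  refine Or.inl ?_
  have hre : z.re ≤ 1 := (re_le_norm z).trans hz
  rw [sub_re, one_re, sub_pos]
  refine hre.lt_of_ne fun h => hz1 ?_
  have him : z.im = 0 :=
    abs_re_eq_norm.mp (le_antisymm (abs_re_le_norm z) (by rw [h]; simpa using hz))
  exact ext (by simpa using h) (by simpa using him)

lemma cauchySeq_sum_range_pow_succ_div (hz : ‖z‖ ≤ 1) (hz1 : z ≠ 1) :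
    CauchySeq fun N => ∑ n ∈ range N, z ^ (n + 1) / (n + 1) := by
  have hanti : Antitone fun n : ℕ => ((n : ℝ) + 1)⁻¹ := fun _ _ hmn => by
    dsimp only
    gcongr
  have hzero : Tendsto (fun n : ℕ => ((n : ℝ) + 1)⁻¹) atTop (𝓝 0) := by
    simpa [one_div] using tendsto_one_div_add_atTop_nhds_zero_nat (𝕜 := ℝ)
  convert hanti.cauchySeq_series_mul_of_tendsto_zero_of_bounded hzero
    (norm_sum_range_pow_succ_le hz hz1) using 3 with N n
  rw [real_smul, div_eq_inv_mul]
  push_cast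
  rfl

lemma eq_neg_log_one_sub_of_tendsto (hz : ‖z‖ ≤ 1) (hz1 : z ≠ 1) {L : ℂ}
    (h : Tendsto (fun N => ∑ n ∈ range N, z ^ n / n) atTop (𝓝 L)) : L = -log (1 - z) := by
  have habel := tendsto_map'_iff.mp (tendsto_tsum_powerSeries_nhdsWithin_lt h)
  refine tendsto_nhds_unique habel ?_
  have hcont : ContinuousAt (fun r : ℝ => -log (1 - r * z)) 1 :=
    ((continuousAt_clog (by simpa using one_sub_mem_slitPlane hz hz1)).comp
      (by fun_prop)).neg
  refine (hcont.continuousWithinAt.tendsto.congr' ?_).mono_right (by simp)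
  filter_upwards [Ioo_mem_nhdsLT (show (-1 : ℝ) < 1 by norm_num)] with r hr
  have hrz : ‖(r : ℂ) * z‖ < 1 := by
    rw [norm_mul, norm_real, Real.norm_eq_abs]
    calc |r| * ‖z‖ ≤ |r| * 1 := by gcongr
      _ < 1 := by rw [mul_one, abs_lt]; exact hr
  rw [← (hasSum_taylorSeries_neg_log hrz).tsum_eq]
  exact tsum_congr fun n => by ring

theorem tendsto_sum_range_pow_succ_div (hz : ‖z‖ ≤ 1) (hz1 : z ≠ 1) :
    Tendsto (fun N => ∑ n ∈ range N, z ^ (n + 1) / (n + 1)) atTop (𝓝 (-log (1 - z))) := by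
  obtain ⟨L, hL⟩ := cauchySeq_tendsto_of_complete (cauchySeq_sum_range_pow_succ_div hz hz1)
  have hunshift : Tendsto (fun N => ∑ n ∈ range N, z ^ n / n) atTop (𝓝 L) := by
    rw [← tendsto_add_atTop_iff_nat 1]
    simpa [sum_range_succ'] using hL
  rwa [← eq_neg_log_one_sub_of_tendsto hz hz1 hunshift]

lemma re_exp_ofReal_mul_I_pow_div (x : ℝ) (n : ℕ) :
    ((cexp (x * I)) ^ n / n).re = Real.cos (n * x) / n := by
  rw [← exp_nat_mul, ← mul_assoc, ← ofReal_natCast, ← ofReal_mul, div_ofReal_re,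
    exp_ofReal_mul_I_re]

end Complex

theorem stmt_5 (x : ℝ) (h1 : 0 < x) (h2 : x < 2 * π) :
    Filter.Tendsto (fun N : ℕ => ∑ n ∈ Finset.range N, Real.cos ((n + 1) * x) / (n + 1))
      Filter.atTop (nhds (-Real.log (2 * Real.sin (x / 2)))) := by
  have hsin : 0 < Real.sin (x / 2) := sin_pos_of_pos_of_lt_pi (by linarith) (by linarith)
  have hnorm : ‖1 - Complex.exp (x * Complex.I)‖ = 2 * Real.sin (x / 2) := by
    rw [norm_sub_rev, mul_comm, Complex.norm_exp_I_mul_ofReal_sub_one,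
      Real.norm_of_nonneg (by positivity)]
  have hz1 : Complex.exp (x * Complex.I) ≠ 1 := fun h => by
    rw [h, sub_self, norm_zero] at hnorm
    linarith
  have hlim := (Complex.continuous_re.tendsto _).comp
    (Complex.tendsto_sum_range_pow_succ_div (Complex.norm_exp_ofReal_mul_I x).le hz1)
  rw [Function.comp_def, Complex.neg_re, Complex.log_re, hnorm] at hlim
  convert hlim using 2 with N
  rw [Complex.re_sum]
  refine sum_congr rfl fun n _ => ?_
  exact_mod_cast (Complex.re_exp_ofReal_mul_I_pow_div x (n + 1)).symm
end
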